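/- Let G be the radius-k star with p ≥ 1 paths, where k ≥ 2 is even. Then the differential chromatic number of G equals p·k/2. -/

import Mathlib

/-- A labeling of the vertices of a finite graph on `n` vertices: a one-to-one
assignment of the numbers `1, …, n` to the vertices. -/
def IsLabeling {V : Type*} [Fintype V] (c : V → ℕ) : Prop :=
  Function.Injective c ∧ ∀ v, c v ∈ Finset.Icc 1 (Fintype.card V)

/-- The differential value of the labeling `c` is at least `d`: every edge has
label difference at least `d`. -/
def DiffValAtLeast {V : Type*} (G : SimpleGraph V) (c : V → ℕ) (d : ℕ) : Prop :=
  ∀ u v, G.Adj u v → d ≤ Nat.dist (c u) (c v)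

/-- The differential chromatic number: the maximum, over all labelings, of the
minimum label difference over the edges. -/
noncomputable def diffChromNum {V : Type*} [Fintype V] (G : SimpleGraph V) : ℕ :=
  sSup {d : ℕ | ∃ c : V → ℕ, IsLabeling c ∧ DiffValAtLeast G c d}

/-- The spider graph with center `none` and `p` attached paths, the `i`-th path
having `ℓ i` vertices `some ⟨i, j⟩` (the vertex `some ⟨i, j⟩` is at level `j + 1`,
i.e. at distance `j + 1` from the center). -/
def spider (p : ℕ) (ℓ : Fin p → ℕ) : SimpleGraph (Option (Σ i : Fin p, Fin (ℓ i))) :=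
  SimpleGraph.fromRel (fun a b =>
    (a = none ∧ ∃ (i : Fin p) (h : 0 < ℓ i), b = some ⟨i, ⟨0, h⟩⟩) ∨
    (∃ (i : Fin p) (x y : Fin (ℓ i)), (x : ℕ) + 1 = (y : ℕ) ∧
      a = some ⟨i, x⟩ ∧ b = some ⟨i, y⟩))

/-- The number of vertices of the spider at even positive level (the vertex
`some ⟨i, j⟩` is at level `j + 1`). -/
def spiderNe (p : ℕ) (ℓ : Fin p → ℕ) : ℕ :=
  (Finset.univ.filter (fun v : Σ i : Fin p, Fin (ℓ i) => (v.2 : ℕ) % 2 = 1)).card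

/-- The number of vertices of the spider at odd level. -/
def spiderNo (p : ℕ) (ℓ : Fin p → ℕ) : ℕ :=
  (Finset.univ.filter (fun v : Σ i : Fin p, Fin (ℓ i) => (v.2 : ℕ) % 2 = 0)).card

/-!
Every vertex of the spider has a neighbour, in particular the vertex carrying the middle label
`pk/2 + 1` of `1, …, pk + 1`; that neighbour's label is within `pk/2` of it, so `DC ≤ pk/2`.
Conversely, with `k = 2t`, give the center the label `1`, the vertices at even level the labels
`2, …, pt + 1` and those at odd level the labels `pt + 2, …, 2pt + 1`, both in the order
(path, level). Then every edge joins labels that differ by `pt` or more.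
-/

theorem IsLabeling.exists_apply_eq {V : Type*} [Fintype V] {c : V → ℕ} (hc : IsLabeling c)
    {m : ℕ} (hm : m ∈ Finset.Icc 1 (Fintype.card V)) : ∃ v, c v = m := by
  have himage : Finset.univ.image c = Finset.Icc 1 (Fintype.card V) :=
    Finset.eq_of_subset_of_card_le (fun _ hx => by
        obtain ⟨v, -, rfl⟩ := Finset.mem_image.mp hx
        exact hc.2 v)
      (by simp [Finset.card_image_of_injective _ hc.1])
  rw [← himage] at hm
  simpa using hm

theorem DiffValAtLeast.le_card_div_two {V : Type*} [Fintype V] [Nonempty V]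
    {G : SimpleGraph V} {c : V → ℕ} {d : ℕ} (hd : DiffValAtLeast G c d) (hc : IsLabeling c)
    (hG : ∀ v, ∃ u, G.Adj v u) : d ≤ Fintype.card V / 2 := by
  have hpos := Fintype.card_pos (α := V)
  obtain ⟨v, hv⟩ := hc.exists_apply_eq (m := Fintype.card V / 2 + 1)
    (Finset.mem_Icc.mpr ⟨by omega, by omega⟩)
  obtain ⟨u, huv⟩ := hG v
  have hu := Finset.mem_Icc.mp (hc.2 u)
  have := hd v u huv
  rw [hv, Nat.dist] at this
  omega

theorem DiffValAtLeast.fromRel {V : Type*} {r : V → V → Prop} {c : V → ℕ} {d : ℕ}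
    (h : ∀ u v, r u v → d ≤ Nat.dist (c u) (c v)) :
    DiffValAtLeast (SimpleGraph.fromRel r) c d := by
  rintro u v ⟨-, huv | hvu⟩
  · exact h u v huv
  · exact Nat.dist_comm (c u) (c v) ▸ h v u hvu

section Spider

variable {p : ℕ} {ℓ : Fin p → ℕ}

theorem spider_adj_center (i : Fin p) (h : 0 < ℓ i) :
    (spider p ℓ).Adj none (some ⟨i, ⟨0, h⟩⟩) :=
  ⟨by simp, Or.inl (Or.inl ⟨rfl, i, h, rfl⟩)⟩

theorem spider_adj_succ (i : Fin p) (j : ℕ) (h : j + 1 < ℓ i) :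
    (spider p ℓ).Adj (some ⟨i, ⟨j, by omega⟩⟩) (some ⟨i, ⟨j + 1, h⟩⟩) :=
  ⟨by simp, Or.inl (Or.inr ⟨i, _, _, rfl, rfl, rfl⟩)⟩

theorem spider_exists_adj (hℓ : ∃ i, 0 < ℓ i) (v : Option (Σ i : Fin p, Fin (ℓ i))) :
    ∃ u, (spider p ℓ).Adj v u := by
  rcases v with _ | ⟨i, ⟨_ | j, hj⟩⟩
  · obtain ⟨i, hi⟩ := hℓ
    exact ⟨_, spider_adj_center i hi⟩
  · exact ⟨_, (spider_adj_center i hj).symm⟩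
  · exact ⟨_, (spider_adj_succ i j hj).symm⟩

end Spider

/-- Vertex `⟨i, j⟩` is at level `j + 1`, so even `j` means odd level and a label in the top half. -/
def spiderLabel (p t : ℕ) : Option (Σ _ : Fin p, Fin (2 * t)) → ℕ
  | none => 1
  | some ⟨i, j⟩ => 2 + (if (j : ℕ) % 2 = 0 then p * t else 0) + (j / 2 + t * i)

theorem card_spider_vertices (p t : ℕ) :
    Fintype.card (Option (Σ _ : Fin p, Fin (2 * t))) = 2 * (p * t) + 1 := by
  simp only [Fintype.card_option, Fintype.card_sigma, Fintype.card_fin, Finset.sum_const,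
    Finset.card_univ, smul_eq_mul]
  ring

theorem half_add_mul_lt {p t : ℕ} (i : Fin p) (j : Fin (2 * t)) : j / 2 + t * i < p * t :=
  (finProdFinEquiv (i, (⟨j / 2, by omega⟩ : Fin t))).isLt

theorem spiderLabel_isLabeling (p t : ℕ) : IsLabeling (spiderLabel p t) := by
  refine ⟨?_, ?_⟩
  · rintro (_ | ⟨i, j⟩) (_ | ⟨i', j'⟩) h
    · rfl
    all_goals simp only [spiderLabel] at h
    · split_ifs at h <;> omega
    · split_ifs at h <;> omega
    have hlt := half_add_mul_lt i j
    have hlt' := half_add_mul_lt i' j'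
    have hparity : (j : ℕ) % 2 = j' % 2 := by split_ifs at h <;> omega
    have hpair := (finProdFinEquiv (m := p) (n := t)).injective
      (a₁ := (i, ⟨j / 2, by omega⟩)) (a₂ := (i', ⟨j' / 2, by omega⟩))
      (Fin.ext (by simp only [finProdFinEquiv_apply_val]; split_ifs at h <;> omega))
    simp only [Prod.mk.injEq, Fin.mk.injEq] at hpair
    obtain ⟨rfl, hhalf⟩ := hpair
    obtain rfl : j = j' := Fin.ext (by omega)
    rfl
  · rintro (_ | ⟨i, j⟩)
    all_goals simp only [spiderLabel, card_spider_vertices, Finset.mem_Icc]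
    · omega
    · have := half_add_mul_lt i j
      split_ifs <;> omega

theorem spiderLabel_diffValAtLeast (p t : ℕ) :
    DiffValAtLeast (spider p (fun _ => 2 * t)) (spiderLabel p t) (p * t) := by
  refine DiffValAtLeast.fromRel ?_
  rintro u v (⟨rfl, i, -, rfl⟩ | ⟨i, j, j', hjj', rfl, rfl⟩)
  · simp only [spiderLabel, Nat.dist, Nat.zero_mod, Nat.zero_div, ↓reduceIte]
    omega
  · simp only [spiderLabel, Nat.dist]
    split_ifs <;> omega

/-- The radius-`k` star with `p ≥ 1` paths (each attached path having exactly `k`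
vertices), where `k ≥ 2` is even, has differential chromatic number `p·k/2`. -/
theorem stmt_10 (p k : ℕ) (hp : 1 ≤ p) (hk : 2 ≤ k) (hke : Even k) :
    diffChromNum (spider p (fun _ => k)) = p * k / 2 := by
  obtain ⟨t, rfl⟩ := hke.two_dvd
  rw [mul_left_comm, Nat.mul_div_cancel_left _ two_pos]
  refine IsGreatest.csSup_eq ⟨⟨_, spiderLabel_isLabeling p t, spiderLabel_diffValAtLeast p t⟩, ?_⟩
  rintro d ⟨c, hc, hd⟩
  have := hd.le_card_div_two hc (spider_exists_adj ⟨⟨0, hp⟩, by omega⟩)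
  rw [card_spider_vertices] at this
  omega
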